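/- arXiv:1912.07512 — 3 statements merged into one kernel-verified Lean document; each statement's English description precedes it below -/
import Mathlib

section
/- Let A be a finite-dimensional local algebra with radical J and M a finite length module. Then γ(M) = γ(Ω M) and γ(M) ≤ |J|, where γ(M) = limsup_n (t_n(M))^{1/n} and |J| is the length of J as a left A-module. -/
/-- The composition length of a module, as the Krull dimension of its submodule lattice. -/
noncomputable def moduleLength (A M : Type*) [Ring A] [AddCommGroup M] [Module A M] : ℕ∞ :=
  (Order.krullDim (Submodule A M)).unbotD 0

/-- `f : P → M` is a projective cover. -/
def IsProjCover (A : Type*) [Ring A] {P M : Type*} [AddCommGroup P] [Module A P]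
    [AddCommGroup M] [Module A M] (f : P →ₗ[A] M) : Prop :=
  Module.Projective A P ∧ Function.Surjective f ∧
    ∀ N : Submodule A P, N ⊔ LinearMap.ker f = ⊤ → N = ⊤

/-- The `n`-th Betti number `t_n = |Ω^n M / J·Ω^n M|` read off from a syzygy tower. -/
noncomputable def betti (A : Type*) [Ring A] (M : ℕ → Type*) [∀ n, AddCommGroup (M n)]
    [∀ n, Module A (M n)] (n : ℕ) : ℕ :=
  (moduleLength A (M n ⧸ (Ideal.jacobson (⊥ : Ideal A) • (⊤ : Submodule A (M n))))).toNat

/-!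
Let `f : P → X` be onto with superfluous kernel. Lifts to `P` of generators of the top `X/JX`
generate `P` (Nakayama on `X`, then superfluity), and a module of length `t` is generated by `t`
elements, so `P` is a quotient of `Aᵗ` and `JP` has length at most `t·|J|`. A superfluous kernel
lies in the radical of `P`, which over an Artinian ring is `JP`; hence
`t_{n+1} ≤ |Ω^{n+1} M| ≤ t_n·|J|`.

From `t_{n+1} ≤ L·t_n` one gets `t_n^{1/n} ≤ C^{1/n}·L`, and
`t_{n+1}^{1/(n+1)} ≤ t_{n+1}^{1/n} ≤ (L+1)^{1/n}·t_n^{1/n}`; the factors `C^{1/n}` tend to `1`,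
so the two limsups agree and are at most `L`.
-/

open Submodule Module

section Length

variable {R M P : Type*} [Ring R] [AddCommGroup M] [Module R M] [AddCommGroup P] [Module R P]

theorem Submodule.exists_finset_card_le_coheight_sup_span_eq_top [IsNoetherian R M]
    (N : Submodule R M) :
    ∃ s : Finset M, (s.card : ℕ∞) ≤ Order.coheight N ∧ N ⊔ span R s = ⊤ := by
  classical
  induction N using WellFoundedGT.induction with
  | _ N ih =>
  by_cases hN : N = ⊤
  · exact ⟨∅, by simp, by simp [hN]⟩
  obtain ⟨x, -, hx⟩ := SetLike.exists_of_lt (lt_top_iff_ne_top.2 hN)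
  have hlt : N < N ⊔ span R {x} := left_lt_sup.2 (by rwa [span_singleton_le_iff_mem])
  obtain ⟨s, hcard, hspan⟩ := ih _ hlt
  refine ⟨insert x s, ?_, ?_⟩
  · calc ((insert x s).card : ℕ∞) ≤ s.card + 1 := by exact_mod_cast Finset.card_insert_le x s
      _ ≤ Order.coheight (N ⊔ span R {x}) + 1 := by gcongr
      _ ≤ Order.coheight N := Order.coheight_add_one_le hlt
  · rwa [Finset.coe_insert, span_insert, ← sup_assoc]

-- `M ⧸ J • ⊤` is a module over the semisimple ring `R ⧸ J`, so its radical vanishes.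
theorem Module.jacobson_le_jacobson_smul_top [IsSemiprimaryRing R] :
    Module.jacobson R M ≤ Ring.jacobson R • (⊤ : Submodule R M) := by
  apply Module.jacobson_le_of_eq_bot
  have h : Module.IsTorsionBySet R (M ⧸ Ring.jacobson R • (⊤ : Submodule R M)) (Ring.jacobson R) :=
    (Module.isTorsionBySet_quotient_iff _ _).mpr fun _ _ hi => Submodule.smul_mem_smul hi trivial
  let _ := h.module
  have := (h.semilinearMap.isSemisimpleModule_iff_of_bijective Function.bijective_id).2
    inferInstance
  exact IsSemisimpleModule.jacobson_eq_bot R _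

theorem Submodule.eq_top_of_sup_jacobson_smul_eq_top [Module.Finite R M] {N : Submodule R M}
    (h : N ⊔ Ring.jacobson R • ⊤ = ⊤) : N = ⊤ := by
  refine (eq_top_or_exists_le_coatom N).resolve_right ?_
  rintro ⟨W, hW, hNW⟩
  refine hW.1 (top_le_iff.1 (h ▸ sup_le hNW ?_))
  exact (Ring.jacobson_smul_top_le R M).trans (sInf_le hW)

theorem Submodule.le_jacobson_of_forall_sup_eq_top {K : Submodule R M}
    (hK : ∀ N : Submodule R M, N ⊔ K = ⊤ → N = ⊤) : K ≤ Module.jacobson R M :=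
  le_sInf fun W hW => by
    by_contra hKW
    exact hW.1 (hK W (hW.2 _ (left_lt_sup.2 hKW)))

theorem LinearMap.exists_finset_card_le_length_span_eq_top [IsNoetherianRing R] [Module.Finite R M]
    {f : P →ₗ[R] M} (hf : Function.Surjective f)
    (hsmall : ∀ N : Submodule R P, N ⊔ LinearMap.ker f = ⊤ → N = ⊤) :
    ∃ t : Finset P, (t.card : ℕ∞) ≤ length R (M ⧸ Ring.jacobson R • (⊤ : Submodule R M)) ∧
      span R (t : Set P) = ⊤ := by
  classical
  set g := (Ring.jacobson R • (⊤ : Submodule R M)).mkQ ∘ₗ f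
  have hg : Function.Surjective g := (Submodule.mkQ_surjective _).comp hf
  obtain ⟨s, hcard, hs⟩ := Submodule.exists_finset_card_le_coheight_sup_span_eq_top
    (R := R) (⊥ : Submodule R (M ⧸ Ring.jacobson R • (⊤ : Submodule R M)))
  refine ⟨s.image (Function.surjInv hg), ?_, hsmall _ ?_⟩
  · rw [length_eq_coheight]
    exact le_trans (by exact_mod_cast Finset.card_image_le) hcard
  have hmap : (map f (span R (s.image (Function.surjInv hg) : Set P))).map
      (Ring.jacobson R • (⊤ : Submodule R M)).mkQ = ⊤ := by
    rw [← map_comp, map_span, Finset.coe_image, ← Set.image_comp,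
      (Function.rightInverse_surjInv hg).comp_eq_id, Set.image_id]
    simpa using hs
  have htop : map f (span R (s.image (Function.surjInv hg) : Set P)) ⊔
      Ring.jacobson R • ⊤ = ⊤ := by
    rw [sup_comm, ← comap_map_mkQ, hmap, comap_top]
  rw [← comap_map_eq, eq_top_of_sup_jacobson_smul_eq_top htop, comap_top]

theorem Submodule.length_smul_top_le (I : Ideal R) [I.IsTwoSided] (t : Finset P)
    (ht : span R (t : Set P) = ⊤) :
    length R (I • ⊤ : Submodule R P) ≤ t.card * length R I := by
  set ψ : (t → I) →ₗ[R] P := Fintype.linearCombination R ((↑) : t → P) ∘ₗ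
    LinearMap.pi (fun i => I.subtype ∘ₗ LinearMap.proj i)
  have hle : I • ⊤ ≤ LinearMap.range ψ := by
    rw [Submodule.smul_le]
    intro a ha p _
    obtain ⟨c, rfl⟩ := (mem_span_range_iff_exists_fun R).1
      (show p ∈ span R (Set.range ((↑) : t → P)) by simp [ht])
    refine ⟨fun i => ⟨a * c i, I.mul_mem_right _ ha⟩, ?_⟩
    simp [ψ, Fintype.linearCombination_apply, Finset.smul_sum, mul_smul]
  calc length R (I • ⊤ : Submodule R P)
      ≤ length R (LinearMap.range ψ) :=
        length_le_of_injective (inclusion hle) (inclusion_injective hle)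
    _ ≤ length R (t → I) := length_le_of_surjective _ ψ.surjective_rangeRestrict
    _ = t.card * length R I := by simp

theorem LinearMap.length_ker_le_length_mul [IsArtinianRing R] [Module.Finite R M]
    {f : P →ₗ[R] M} (hf : Function.Surjective f)
    (hsmall : ∀ N : Submodule R P, N ⊔ LinearMap.ker f = ⊤ → N = ⊤) :
    length R (LinearMap.ker f) ≤
      length R (M ⧸ Ring.jacobson R • (⊤ : Submodule R M)) * length R (Ring.jacobson R) := by
  obtain ⟨t, hcard, ht⟩ := f.exists_finset_card_le_length_span_eq_top hf hsmall
  have hker : LinearMap.ker f ≤ Ring.jacobson R • ⊤ :=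
    (le_jacobson_of_forall_sup_eq_top hsmall).trans jacobson_le_jacobson_smul_top
  calc length R (LinearMap.ker f)
      ≤ length R (Ring.jacobson R • ⊤ : Submodule R P) :=
        length_le_of_injective (inclusion hker) (inclusion_injective hker)
    _ ≤ t.card * length R (Ring.jacobson R) := length_smul_top_le _ t ht
    _ ≤ _ := by gcongr

end Length

theorem moduleLength_eq_length (A M : Type*) [Ring A] [AddCommGroup M] [Module A M] :
    moduleLength A M = Module.length A M := by
  rw [moduleLength, ← Module.coe_length, WithBot.unbotD_coe]

theorem betti_succ_le_mul {A : Type*} [Ring A] [IsArtinianRing A]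
    {M P : ℕ → Type*} [∀ n, AddCommGroup (M n)] [∀ n, Module A (M n)]
    [∀ n, Module.Finite A (M n)] [∀ n, AddCommGroup (P n)] [∀ n, Module A (P n)]
    {f : ∀ n, P n →ₗ[A] M n} (hcover : ∀ n, IsProjCover A (f n))
    (hsyz : ∀ n, Nonempty (M (n + 1) ≃ₗ[A] LinearMap.ker (f n))) (n : ℕ) :
    betti A M (n + 1) ≤ betti A M n * (moduleLength A (Ideal.jacobson (⊥ : Ideal A))).toNat := by
  obtain ⟨e⟩ := hsyz n
  simp only [betti, moduleLength_eq_length, ← ENat.toNat_mul]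
  rw [Ideal.jacobson_bot]
  refine ENat.toNat_le_toNat ?_ (WithTop.mul_ne_top length_ne_top length_ne_top)
  calc length A (M (n + 1) ⧸ Ring.jacobson A • (⊤ : Submodule A (M (n + 1))))
      ≤ length A (M (n + 1)) := length_le_of_surjective _ (mkQ_surjective _)
    _ = length A (LinearMap.ker (f n)) := e.length_eq
    _ ≤ _ := (f n).length_ker_le_length_mul (hcover n).2.1 (hcover n).2.2

section GrowthRate

open Filter Topology

theorem Filter.limsup_le_limsup_of_le_mul {u v r : ℕ → ℝ} (hr : Tendsto r atTop (𝓝 1))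
    (huv : ∀ᶠ n in atTop, u n ≤ r n * v n) (hv₀ : ∀ n, 0 ≤ v n)
    (hv : IsBoundedUnder (· ≤ ·) atTop v) (hu : IsCoboundedUnder (· ≤ ·) atTop u) :
    limsup u atTop ≤ limsup v atTop := by
  obtain ⟨B, hB⟩ := id hv
  refine le_of_forall_pos_le_add fun ε hε => limsup_le_of_le hu ?_
  have hsmall : Tendsto (fun n => |r n - 1| * B) atTop (𝓝 0) := by
    simpa using (hr.sub_const 1).abs.mul_const B
  filter_upwards [huv, eventually_map.1 hB,
    eventually_lt_of_limsup_lt (lt_add_of_pos_right _ (half_pos hε)) hv,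
    hsmall.eventually (eventually_lt_nhds (half_pos hε))] with n huv hvB hvε hrB
  have := mul_le_mul_of_nonneg_right (le_abs_self (r n - 1)) (hv₀ n)
  have := mul_le_mul_of_nonneg_left hvB (abs_nonneg (r n - 1))
  nlinarith

theorem tendsto_const_rpow_inv_natCast {C : ℝ} (hC : 0 < C) :
    Tendsto (fun n : ℕ => C ^ (n : ℝ)⁻¹) atTop (𝓝 1) := by
  simpa using tendsto_const_nhds.rpow
    (tendsto_inv_atTop_zero.comp tendsto_natCast_atTop_atTop) (Or.inl hC.ne')

theorem Real.rpow_inv_natCast_le_of_le_mul_pow {x C t : ℝ} {n : ℕ} (hx : 0 ≤ x) (hC : 0 ≤ C)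
    (ht : 0 ≤ t) (hn : n ≠ 0) (h : x ≤ C * t ^ n) : x ^ (n : ℝ)⁻¹ ≤ C ^ (n : ℝ)⁻¹ * t :=
  calc x ^ (n : ℝ)⁻¹ ≤ (C * t ^ n) ^ (n : ℝ)⁻¹ := by gcongr
    _ = C ^ (n : ℝ)⁻¹ * t := by
      rw [Real.mul_rpow hC (by positivity), Real.pow_rpow_inv_natCast ht hn]

theorem Real.natCast_rpow_le_rpow_of_exponent_le (m : ℕ) {a b : ℝ} (ha : 0 < a) (hab : a ≤ b) :
    (m : ℝ) ^ a ≤ (m : ℝ) ^ b := by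
  rcases Nat.eq_zero_or_pos m with rfl | hm
  · simp [Real.zero_rpow ha.ne', Real.zero_rpow (ha.trans_le hab).ne']
  · exact Real.rpow_le_rpow_of_exponent_le (by exact_mod_cast hm) hab

theorem le_mul_pow_of_succ_le_mul {c : ℕ → ℕ} {L : ℕ} (hc : ∀ n, c (n + 1) ≤ c n * L) (n : ℕ) :
    c n ≤ c 0 * L ^ n := by
  induction n with
  | zero => simp
  | succ n ih =>
    calc c (n + 1) ≤ c n * L := hc n
      _ ≤ c 0 * L ^ n * L := by gcongr
      _ = c 0 * L ^ (n + 1) := by ring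

theorem limsup_rpow_inv_natCast_of_succ_le_mul {c : ℕ → ℕ} {L : ℕ}
    (hc : ∀ n, c (n + 1) ≤ c n * L) :
    limsup (fun n : ℕ => (c n : ℝ) ^ (n : ℝ)⁻¹) atTop =
      limsup (fun n : ℕ => (c (n + 1) : ℝ) ^ (n : ℝ)⁻¹) atTop ∧
    limsup (fun n : ℕ => (c n : ℝ) ^ (n : ℝ)⁻¹) atTop ≤ L := by
  set u := fun n : ℕ => (c n : ℝ) ^ (n : ℝ)⁻¹
  set w := fun n : ℕ => (c (n + 1) : ℝ) ^ (n : ℝ)⁻¹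
  set r := fun n : ℕ => ((c 0 : ℝ) + 1) ^ (n : ℝ)⁻¹
  set r' := fun n : ℕ => ((L : ℝ) + 1) ^ (n : ℝ)⁻¹
  have hr : Tendsto r atTop (𝓝 1) := tendsto_const_rpow_inv_natCast (by positivity)
  have hr' : Tendsto r' atTop (𝓝 1) := tendsto_const_rpow_inv_natCast (by positivity)
  have hu₀ : ∀ n, 0 ≤ u n := fun n => by positivity
  have hu_le : ∀ᶠ n in atTop, u n ≤ r n * L := by
    filter_upwards [eventually_ne_atTop 0] with n hn
    refine Real.rpow_inv_natCast_le_of_le_mul_pow (by positivity) (by positivity)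
      (by positivity) hn ?_
    have : (c n : ℝ) ≤ c 0 * L ^ n := by exact_mod_cast le_mul_pow_of_succ_le_mul hc n
    nlinarith [pow_nonneg (L.cast_nonneg : (0 : ℝ) ≤ L) n]
  have hw_le : ∀ᶠ n in atTop, w n ≤ r' n * u n := by
    filter_upwards [eventually_ne_atTop 0] with n hn
    refine Real.rpow_inv_natCast_le_of_le_mul_pow (by positivity) (by positivity) (hu₀ n) hn ?_
    rw [Real.rpow_inv_natCast_pow (by positivity) hn]
    have : (c (n + 1) : ℝ) ≤ c n * L := by exact_mod_cast hc n
    nlinarith [(c n).cast_nonneg (α := ℝ)]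
  have hshift : ∀ᶠ n in atTop, u (n + 1) ≤ w n := by
    filter_upwards [eventually_ne_atTop 0] with n hn
    refine Real.natCast_rpow_le_rpow_of_exponent_le _ (by positivity) ?_
    exact inv_anti₀ (by positivity) (by simp)
  have hu_bdd : IsBoundedUnder (· ≤ ·) atTop u :=
    (hr.mul_const (L : ℝ)).isBoundedUnder_le.mono_le hu_le
  have hw_bdd : IsBoundedUnder (· ≤ ·) atTop w := by
    refine (hr'.mul (hr.mul_const (L : ℝ))).isBoundedUnder_le.mono_le ?_
    filter_upwards [hw_le, hu_le] with n hw hu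
    exact hw.trans (mul_le_mul_of_nonneg_left hu (by positivity))
  have hcob {v : ℕ → ℝ} (hv : ∀ n, 0 ≤ v n) : IsCoboundedUnder (· ≤ ·) atTop v :=
    isCoboundedUnder_le_of_le atTop hv
  refine ⟨le_antisymm ?_ (limsup_le_limsup_of_le_mul hr' hw_le hu₀ hu_bdd
    (hcob fun _ => by positivity)), ?_⟩
  · rw [← limsup_nat_add u 1]
    exact limsup_le_limsup hshift (hcob fun n => hu₀ _) hw_bdd
  · simpa using limsup_le_limsup_of_le_mul hr hu_le (fun _ => L.cast_nonneg)
      isBoundedUnder_const (hcob hu₀)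

end GrowthRate

theorem stmt_2_general (k A : Type*) [Field k] [Ring A] [Algebra k A] [FiniteDimensional k A]
    (M P : ℕ → Type*) [∀ n, AddCommGroup (M n)] [∀ n, Module A (M n)]
    [∀ n, Module.Finite A (M n)] [∀ n, AddCommGroup (P n)] [∀ n, Module A (P n)]
    (f : ∀ n, P n →ₗ[A] M n) (hcover : ∀ n, IsProjCover A (f n))
    (hsyz : ∀ n, Nonempty (M (n + 1) ≃ₗ[A] LinearMap.ker (f n))) :
    Filter.limsup (fun n : ℕ => (betti A M n : ℝ) ^ ((n : ℝ)⁻¹)) Filter.atTop =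
      Filter.limsup (fun n : ℕ => (betti A M (n + 1) : ℝ) ^ ((n : ℝ)⁻¹)) Filter.atTop ∧
    Filter.limsup (fun n : ℕ => (betti A M n : ℝ) ^ ((n : ℝ)⁻¹)) Filter.atTop ≤
      ((moduleLength A (Ideal.jacobson (⊥ : Ideal A))).toNat : ℝ) := by
  have : IsArtinianRing A := IsArtinianRing.of_finite k A
  exact limsup_rpow_inv_natCast_of_succ_le_mul (betti_succ_le_mul hcover hsyz)

/-- Lemma 2.3: for a finite-dimensional local algebra `A` with radical `J` and a finite
length module `M` (with minimal projective resolution encoded as a syzygy tower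
`M n = Ω^n M`), one has `γ(M) = γ(Ω M)` and `γ(M) ≤ |J|`, where
`γ(M) = limsup_n t_n(M)^{1/n}`. Note `γ(Ω M) = limsup_n t_{n+1}(M)^{1/n}`. -/
theorem stmt_2 (k A : Type*) [Field k] [Ring A] [Algebra k A] [FiniteDimensional k A]
    [IsLocalRing A]
    (M P : ℕ → Type*) [∀ n, AddCommGroup (M n)] [∀ n, Module A (M n)]
    [∀ n, Module.Finite A (M n)] [∀ n, AddCommGroup (P n)] [∀ n, Module A (P n)]
    (f : ∀ n, P n →ₗ[A] M n) (hcover : ∀ n, IsProjCover A (f n))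
    (hsyz : ∀ n, Nonempty (M (n + 1) ≃ₗ[A] LinearMap.ker (f n))) :
    Filter.limsup (fun n : ℕ => (betti A M n : ℝ) ^ ((n : ℝ)⁻¹)) Filter.atTop =
      Filter.limsup (fun n : ℕ => (betti A M (n + 1) : ℝ) ^ ((n : ℝ)⁻¹)) Filter.atTop ∧
    Filter.limsup (fun n : ℕ => (betti A M n : ℝ) ^ ((n : ℝ)⁻¹)) Filter.atTop ≤
      ((moduleLength A (Ideal.jacobson (⊥ : Ideal A))).toNat : ℝ) :=
  stmt_2_general k A M P f hcover hsyz
end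

section
/- Let ω : ℝ² → ℝ² be a linear transformation and x ∈ ℝ² a vector with ω^n x > 0 (both coordinates positive) for all n ≥ 0. Then ω has real eigenvalues. Moreover, if x is an eigenvector with eigenvalue λ, then λ > 0; and if x is not an eigenvector, then the spectral radius ρ(ω) is itself an eigenvalue of ω. -/
/-!
Each coordinate sequence `u n = (ωⁿ x) i` is positive and, by Cayley–Hamilton, satisfies
`u (n + 2) = tr ω · u (n + 1) - det ω · u n`. A negative discriminant is impossible: the ratios
`u (n + 1) / u n` would then drop by a fixed amount at every step. So the eigenvalues `b ≤ a` are
real. If `a + b < 0`, then `b < 0` dominates in absolute value, and positivity kills the component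
of `x` along its eigenvector, i.e. `ω x = a x`. Otherwise `|b| ≤ a`, so `ρ(ω) = a`.
-/

/-- The spectral radius of a real 2×2 matrix: the maximum of the absolute values of its
complex eigenvalues. -/
noncomputable def specRad (ω : Matrix (Fin 2) (Fin 2) ℝ) : ℝ :=
  sSup ((fun z : ℂ => ‖z‖) '' spectrum ℂ (ω.map Complex.ofReal))

open Matrix Filter

namespace Matrix

variable {R : Type*} [CommRing R]

theorem sq_fin_two_eq_trace_smul_sub_det_smul (A : Matrix (Fin 2) (Fin 2) R) :
    A ^ 2 = A.trace • A - A.det • 1 := by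
  ext i j
  fin_cases i <;> fin_cases j <;> simp [sq, mul_apply, trace_fin_two, det_fin_two] <;> ring

theorem pow_mulVec_add_two_fin_two (A : Matrix (Fin 2) (Fin 2) R) (x : Fin 2 → R) (n : ℕ) :
    A ^ (n + 2) *ᵥ x = A.trace • (A ^ (n + 1) *ᵥ x) - A.det • (A ^ n *ᵥ x) := by
  rw [add_comm, pow_add, sq_fin_two_eq_trace_smul_sub_det_smul, pow_succ', ← mulVec_mulVec,
    ← mulVec_mulVec (v := x) A]
  simp [sub_mulVec, smul_mulVec]

theorem spectrum_fin_two {K : Type*} [Field K] (A : Matrix (Fin 2) (Fin 2) K) {a b : K}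
    (hsum : a + b = A.trace) (hprod : a * b = A.det) : spectrum K A = {a, b} := by
  ext z
  have hfactor : z ^ 2 - A.trace * z + A.det = (z - a) * (z - b) := by
    rw [← hsum, ← hprod]; ring
  simp [mem_spectrum_iff_isRoot_charpoly, charpoly_fin_two, hfactor, sub_eq_zero]

end Matrix

theorem exists_add_eq_and_mul_eq_of_four_mul_le_sq {t d : ℝ} (h : 4 * d ≤ t ^ 2) :
    ∃ a b : ℝ, b ≤ a ∧ a + b = t ∧ a * b = d := by
  have hs := Real.sq_sqrt (sub_nonneg.mpr h)
  refine ⟨(t + √(t ^ 2 - 4 * d)) / 2, (t - √(t ^ 2 - 4 * d)) / 2, ?_, by ring, ?_⟩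
  · linarith [Real.sqrt_nonneg (t ^ 2 - 4 * d)]
  · linear_combination (-1 / 4 : ℝ) * hs

theorem sub_mul_eq_pow_mul_of_rec {R : Type*} [CommRing R] {a b : R} {u : ℕ → R}
    (hrec : ∀ n, u (n + 2) = (a + b) * u (n + 1) - a * b * u n) (n : ℕ) :
    u (n + 1) - a * u n = b ^ n * (u 1 - a * u 0) := by
  induction n with
  | zero => simp
  | succ n ih => linear_combination hrec n + b * ih

theorem four_mul_le_sq_of_rec_pos {t d : ℝ} {u : ℕ → ℝ}
    (hrec : ∀ n, u (n + 2) = t * u (n + 1) - d * u n) (hpos : ∀ n, 0 < u n) :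
    4 * d ≤ t ^ 2 := by
  by_contra! hdisc
  set δ := d - t ^ 2 / 4 with hδ_def
  have hδ : 0 < δ := by linarith
  set q : ℕ → ℝ := fun n => u (n + 1) / u n
  have hq_pos : ∀ n, 0 < q n := fun n => div_pos (hpos _) (hpos _)
  -- the ratios iterate `q ↦ t - d / q`, and `q² - t q + d ≥ δ`
  have hstep : ∀ n, δ ≤ q n * (q n - q (n + 1)) := by
    intro n
    have hmob : q n * q (n + 1) = t * q n - d := by
      simp only [q, hrec]
      field_simp [(hpos n).ne', (hpos (n + 1)).ne']
    nlinarith [sq_nonneg (q n - t / 2)]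
  have hanti : Antitone q := antitone_nat_of_succ_le fun n => by
    nlinarith [hstep n, hq_pos n]
  have hdrop : ∀ n : ℕ, n * δ ≤ q 0 * (q 0 - q n) := by
    intro n
    induction n with
    | zero => simp
    | succ n ih =>
      push_cast
      nlinarith [hstep n, hq_pos n, hanti (Nat.zero_le n), hanti (Nat.le_succ n)]
  obtain ⟨n, hn⟩ := exists_nat_gt (q 0 ^ 2 / δ)
  rw [div_lt_iff₀ hδ] at hn
  nlinarith [hdrop n, hq_pos 0, hq_pos n]

theorem eq_mul_of_rec_pos {a b : ℝ} {u : ℕ → ℝ}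
    (hrec : ∀ n, u (n + 2) = (a + b) * u (n + 1) - a * b * u n) (hpos : ∀ n, 0 < u n)
    (hb : b < 0) (hab : a + b < 0) : u 1 = a * u 0 := by
  have hv := sub_mul_eq_pow_mul_of_rec hrec
  have hw := sub_mul_eq_pow_mul_of_rec (a := b) (b := a)
    (by simpa only [add_comm, mul_comm] using hrec)
  have hw_pos : ∀ n, 0 < a ^ n * (u 1 - b * u 0) := fun n => by
    rw [← hw]; nlinarith [hpos n, hpos (n + 1)]
  have ha : 0 < a := by
    have := hw_pos 1
    rw [pow_one] at this
    exact pos_of_mul_pos_left this (by simpa using (hw_pos 0).le)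
  -- `|bⁿ v₀| = |u (n + 1) - a u n| ≤ 2 (u (n + 1) - b u n) = 2 aⁿ w₀`, while `a < |b|`
  have hbound : ∀ n, |u 1 - a * u 0| ≤ 2 * (u 1 - b * u 0) * (a / -b) ^ n := by
    intro n
    have hvn : |b| ^ n * |u 1 - a * u 0| ≤ 2 * (a ^ n * (u 1 - b * u 0)) := by
      rw [← abs_pow, ← abs_mul, ← hv, ← hw, abs_le]
      constructor <;> nlinarith [hpos n, hpos (n + 1)]
    rw [abs_of_neg hb] at hvn
    rw [div_pow, mul_div_assoc', le_div_iff₀ (pow_pos (neg_pos.mpr hb) n)]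
    linarith
  have hratio : Tendsto (fun n => 2 * (u 1 - b * u 0) * (a / -b) ^ n) atTop (nhds 0) := by
    simpa using (tendsto_pow_atTop_nhds_zero_of_lt_one (div_nonneg ha.le (neg_nonneg.mpr hb.le))
      ((div_lt_one (neg_pos.mpr hb)).mpr (by linarith))).const_mul (2 * (u 1 - b * u 0))
  have hv0 : |u 1 - a * u 0| ≤ 0 := ge_of_tendsto' hratio hbound
  exact sub_eq_zero.mp (abs_nonpos_iff.mp hv0)

/-- Lemma 5.3 (a 2-dimensional Perron–Frobenius variant): if `ω^n x > 0` (coordinatewise)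
for all `n ≥ 0`, then all complex eigenvalues of `ω` are real; if `x` is an eigenvector
with eigenvalue `λ`, then `λ > 0`; and if `x` is not an eigenvector, then the spectral
radius of `ω` is an eigenvalue of `ω`. -/
theorem stmt_6 (ω : Matrix (Fin 2) (Fin 2) ℝ) (x : Fin 2 → ℝ)
    (hpos : ∀ n : ℕ, ∀ i : Fin 2, 0 < ((ω ^ n).mulVec x) i) :
    (∀ z ∈ spectrum ℂ (ω.map Complex.ofReal), z.im = 0) ∧
    (∀ lam : ℝ, ω.mulVec x = lam • x → 0 < lam) ∧
    ((¬ ∃ lam : ℝ, ω.mulVec x = lam • x) → specRad ω ∈ spectrum ℝ ω) := by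
  have hrec (i : Fin 2) (n : ℕ) : (ω ^ (n + 2) *ᵥ x) i =
      ω.trace * (ω ^ (n + 1) *ᵥ x) i - ω.det * (ω ^ n *ᵥ x) i := by
    simp only [pow_mulVec_add_two_fin_two, Pi.sub_apply, Pi.smul_apply, smul_eq_mul]
  obtain ⟨a, b, hba, hsum, hprod⟩ := exists_add_eq_and_mul_eq_of_four_mul_le_sq
    (four_mul_le_sq_of_rec_pos (hrec 0) (hpos · 0))
  have hspecC : spectrum ℂ (ω.map Complex.ofReal) = {(a : ℂ), (b : ℂ)} :=
    spectrum_fin_two _ (by simpa [trace_fin_two] using congrArg Complex.ofReal hsum)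
      (by simpa [det_fin_two] using congrArg Complex.ofReal hprod)
  refine ⟨?_, fun lam hlam => ?_, fun hnot => ?_⟩
  · simp only [hspecC, Set.mem_insert_iff, Set.mem_singleton_iff]
    rintro z (rfl | rfl) <;> simp
  · have h1 := hpos 1 0
    rw [pow_one, hlam] at h1
    simpa using pos_of_mul_pos_left h1 (by simpa using (hpos 0 0).le)
  · have hab : 0 ≤ a + b := by
      by_contra! hab
      refine hnot ⟨a, funext fun i => ?_⟩
      simpa using eq_mul_of_rec_pos (u := fun n => (ω ^ n *ᵥ x) i)
        (by simpa [hsum, hprod] using hrec i) (hpos · i) (by linarith) hab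
    have hspecRad : specRad ω = a := by
      rw [specRad, hspecC, Set.image_pair, Complex.norm_real, Complex.norm_real, Real.norm_eq_abs,
        Real.norm_eq_abs, csSup_pair, abs_of_nonneg (by linarith), sup_eq_left, abs_le]
      constructor <;> linarith
    rw [hspecRad, spectrum_fin_two ω hsum hprod]
    exact Set.mem_insert a {b}
end

section
/- Let e, a be real numbers with 0 < a ≤ e²/4 and e ≥ 2, and let ω = [[e, -1], [a, 0]]. Then (1, 0) is not an eigenvector of ω, and consequently limsup_n |ω^n(1,0)|^{1/n} = (e + √(e²−4a))/2, where |(x,y)| = |x| + |y|. -/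
/-- The growth rate `limsup_n |ω^n x|^{1/n}` where `|(x₁,x₂)| = |x₁| + |x₂|`. -/
noncomputable def growth (ω : Matrix (Fin 2) (Fin 2) ℝ) (x : Fin 2 → ℝ) : ℝ :=
  Filter.limsup
    (fun n : ℕ => (|((ω ^ n).mulVec x) 0| + |((ω ^ n).mulVec x) 1|) ^ ((n : ℝ)⁻¹))
    Filter.atTop

/-!
Write `e = x + y` and `a = x y` with `x = (e + √(e² - 4a))/2 ≥ y = (e - √(e² - 4a))/2 ≥ 0`.
Then `ω^n (1, 0) = (G (n+1), x y G n)` with `G n = ∑_{i<n} xⁱ y^(n-1-i)`, the solution of the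
recurrence `G (n+2) = e G (n+1) - a G n` with `G 0 = 0`, `G 1 = 1`. Comparing each term of
`G (n+1)` with `xⁿ` gives `xⁿ ≤ |ω^n (1, 0)| ≤ (1 + x)(n + 1) xⁿ`, and the `n`-th roots of
both bounds tend to `x`.
-/

open Filter Finset Topology

section GeomSum₂

variable {R : Type*}

def geomSum₂ [CommSemiring R] (x y : R) (n : ℕ) : R :=
  ∑ i ∈ range n, x ^ i * y ^ (n - 1 - i)

theorem geomSum₂_succ [CommSemiring R] (x y : R) (n : ℕ) :
    geomSum₂ x y (n + 1) = x * geomSum₂ x y n + y ^ n := by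
  simp only [geomSum₂, sum_range_succ', mul_sum, add_tsub_cancel_right, pow_zero, one_mul,
    tsub_zero]
  congr 1
  refine sum_congr rfl fun i _ => ?_
  rw [pow_succ', mul_assoc, Nat.sub_sub, add_comm 1 i]

theorem geomSum₂_add_two [CommRing R] (x y : R) (n : ℕ) :
    geomSum₂ x y (n + 2) = (x + y) * geomSum₂ x y (n + 1) - x * y * geomSum₂ x y n := by
  rw [geomSum₂_succ x y (n + 1), geomSum₂_succ x y n]
  ring

theorem pow_mulVec_eq_geomSum₂ [CommRing R] (x y : R) (n : ℕ) :
    (!![x + y, -1; x * y, 0] ^ n).mulVec ![1, 0] =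
      ![geomSum₂ x y (n + 1), x * y * geomSum₂ x y n] := by
  induction n with
  | zero => ext i; fin_cases i <;> simp [geomSum₂]
  | succ n ih =>
    rw [pow_succ', ← Matrix.mulVec_mulVec, ih, geomSum₂_add_two]
    ext i; fin_cases i <;> simp [Matrix.mulVec, dotProduct]; ring

variable [CommSemiring R] [PartialOrder R] [IsOrderedRing R] {x y : R}

theorem geomSum₂_nonneg (hx : 0 ≤ x) (hy : 0 ≤ y) (n : ℕ) : 0 ≤ geomSum₂ x y n :=
  sum_nonneg fun _ _ => by positivity

theorem pow_le_geomSum₂_succ (hx : 0 ≤ x) (hy : 0 ≤ y) (n : ℕ) :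
    x ^ n ≤ geomSum₂ x y (n + 1) := by
  rw [geomSum₂, sum_range_succ, add_tsub_cancel_right, tsub_self, pow_zero, mul_one]
  exact le_add_of_nonneg_left (sum_nonneg fun _ _ => by positivity)

theorem geomSum₂_succ_le (hy : 0 ≤ y) (hyx : y ≤ x) (n : ℕ) :
    geomSum₂ x y (n + 1) ≤ (n + 1) * x ^ n := by
  have hx := hy.trans hyx
  have hterm : ∀ i ∈ range (n + 1), x ^ i * y ^ (n + 1 - 1 - i) ≤ x ^ n := fun i hi => by
    rw [add_tsub_cancel_right, ← pow_mul_pow_sub x (mem_range_succ_iff.1 hi)]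
    gcongr
  simpa [geomSum₂] using sum_le_card_nsmul _ _ _ hterm

theorem geomSum₂_succ_add_mul_le (hy : 0 ≤ y) (hyx : y ≤ x) (n : ℕ) :
    geomSum₂ x y (n + 1) + x * y * geomSum₂ x y n ≤ (1 + x) * (n + 1) * x ^ n := by
  have hx := hy.trans hyx
  have hG := geomSum₂_nonneg hx hy
  have hmul : x * geomSum₂ x y n ≤ geomSum₂ x y (n + 1) := by
    rw [geomSum₂_succ]
    exact le_add_of_nonneg_right (pow_nonneg hy n)
  calc geomSum₂ x y (n + 1) + x * y * geomSum₂ x y n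
      = geomSum₂ x y (n + 1) + y * (x * geomSum₂ x y n) := by ring
    _ ≤ geomSum₂ x y (n + 1) + x * geomSum₂ x y (n + 1) := by
      grw [hmul, hyx]
      exact hG _
    _ = (1 + x) * geomSum₂ x y (n + 1) := by ring
    _ ≤ (1 + x) * ((n + 1) * x ^ n) := by
      grw [geomSum₂_succ_le hy hyx n]
      exact add_nonneg zero_le_one hx
    _ = (1 + x) * (n + 1) * x ^ n := by ring

end GeomSum₂

theorem tendsto_mul_add_one_rpow_inv {c : ℝ} (hc : 0 < c) :
    Tendsto (fun n : ℕ => (c * (n + 1)) ^ (n : ℝ)⁻¹) atTop (𝓝 1) := by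
  have hinv : Tendsto (fun n : ℕ => (n : ℝ)⁻¹) atTop (𝓝 0) :=
    tendsto_inv_atTop_zero.comp tendsto_natCast_atTop_atTop
  have hconst : Tendsto (fun n : ℕ => c ^ (n : ℝ)⁻¹) atTop (𝓝 1) := by
    simpa using tendsto_const_nhds.rpow hinv (Or.inl hc.ne')
  have hsucc : Tendsto (fun n : ℕ => ((n : ℝ) + 1) ^ (n : ℝ)⁻¹) atTop (𝓝 1) := by
    have := (tendsto_rpow_div_mul_add 1 1 (-1) one_ne_zero.symm).comp
      (tendsto_atTop_add_const_right atTop 1 (tendsto_natCast_atTop_atTop (R := ℝ)))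
    refine this.congr fun n => ?_
    simp
  simpa using (hconst.mul hsucc).congr fun n => (Real.mul_rpow hc.le (by positivity)).symm

theorem tendsto_rpow_inv_of_pow_le_of_le_mul {u : ℕ → ℝ} {x c : ℝ} (hx : 0 ≤ x) (hc : 0 < c)
    (hlow : ∀ n, x ^ n ≤ u n) (hup : ∀ n, u n ≤ c * (n + 1) * x ^ n) :
    Tendsto (fun n => u n ^ (n : ℝ)⁻¹) atTop (𝓝 x) := by
  have hupper : Tendsto (fun n : ℕ => (c * (n + 1)) ^ (n : ℝ)⁻¹ * x) atTop (𝓝 x) := by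
    simpa using (tendsto_mul_add_one_rpow_inv hc).mul_const x
  refine tendsto_of_tendsto_of_tendsto_of_le_of_le' tendsto_const_nhds hupper ?_ ?_
  all_goals filter_upwards [eventually_ne_atTop 0] with n hn
  · calc x = (x ^ n) ^ (n : ℝ)⁻¹ := (Real.pow_rpow_inv_natCast hx hn).symm
      _ ≤ u n ^ (n : ℝ)⁻¹ := by gcongr; exact hlow n
  · calc u n ^ (n : ℝ)⁻¹ ≤ (c * (n + 1) * x ^ n) ^ (n : ℝ)⁻¹ := by
          gcongr
          exacts [(pow_nonneg hx n).trans (hlow n), hup n]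
      _ = (c * (n + 1)) ^ (n : ℝ)⁻¹ * x := by
          rw [Real.mul_rpow (by positivity) (by positivity), Real.pow_rpow_inv_natCast hx hn]

/-- For `0 < a ≤ e²/4` and `e ≥ 2`, the vector `(1,0)` is not an eigenvector of
`ω = [[e,-1],[a,0]]`, and `limsup_n |ω^n (1,0)|^{1/n} = (e + √(e²-4a))/2`. -/
theorem stmt_12 (e a : ℝ) (ha0 : 0 < a) (ha : a ≤ e ^ 2 / 4) (he : 2 ≤ e) :
    (¬ ∃ lam : ℝ, (!![e, -1; a, 0]).mulVec ![1, 0] = lam • ![(1 : ℝ), 0]) ∧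
    growth !![e, -1; a, 0] ![1, 0] = (e + Real.sqrt (e ^ 2 - 4 * a)) / 2 := by
  refine ⟨fun ⟨lam, h⟩ => ?_, ?_⟩
  · exact ha0.ne' (by simpa [Matrix.mulVec, dotProduct] using congrFun h 1)
  · set s := Real.sqrt (e ^ 2 - 4 * a)
    have hs : s ^ 2 = e ^ 2 - 4 * a := Real.sq_sqrt (by linarith)
    have hs0 : 0 ≤ s := Real.sqrt_nonneg _
    have hse : s ≤ e := by nlinarith
    set x := (e + s) / 2 with hx_def
    set y := (e - s) / 2 with hy_def
    have hy0 : 0 ≤ y := by linarith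
    have hyx : y ≤ x := by linarith
    have hsum : x + y = e := by ring
    have hprod : x * y = a := by nlinarith
    rw [growth, ← hsum, ← hprod]
    simp only [pow_mulVec_eq_geomSum₂, Matrix.cons_val_zero, Matrix.cons_val_one]
    have hx0 : 0 ≤ x := hy0.trans hyx
    have hG := geomSum₂_nonneg hx0 hy0
    simp only [abs_of_nonneg (hG _), abs_of_nonneg (mul_nonneg (mul_nonneg hx0 hy0) (hG _))]
    refine (tendsto_rpow_inv_of_pow_le_of_le_mul hx0 (by positivity : (0 : ℝ) < 1 + x)
      (fun n => ?_) (geomSum₂_succ_add_mul_le hy0 hyx)).limsup_eq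
    exact (pow_le_geomSum₂_succ hx0 hy0 n).trans
      (le_add_of_nonneg_right (mul_nonneg (mul_nonneg hx0 hy0) (hG n)))
end
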